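/- If Ψ has unit-norm columns with mutual coherence μ(Ψ), and c* satisfies Ψc* = u with ‖c*‖₀ < (1 + 1/μ(Ψ))/2, then c* is the unique solution of the ℓ₀ minimization problem min ‖c‖₀ subject to Ψc = u. -/

import Mathlib

open Finset

noncomputable def coherence {M K : ℕ} (Ψ : Matrix (Fin M) (Fin K) ℝ) : ℝ :=
  sSup {x : ℝ | ∃ i j : Fin K, i ≠ j ∧
    x = |∑ m, Ψ m i * Ψ m j| /
      (Real.sqrt (∑ m, (Ψ m i)^2) * Real.sqrt (∑ m, (Ψ m j)^2))}

noncomputable def l0 {K : ℕ} (c : Fin K → ℝ) : ℕ := (Finset.univ.filter fun j => c j ≠ 0).card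

noncomputable def l1 {K : ℕ} (c : Fin K → ℝ) : ℝ := ∑ j, |c j|

noncomputable def l2 {n : ℕ} (c : Fin n → ℝ) : ℝ := Real.sqrt (∑ j, (c j)^2)

noncomputable def ripConst {M K : ℕ} (Ψ : Matrix (Fin M) (Fin K) ℝ) (S : ℕ) : ℝ :=
  sInf {δ : ℝ | 0 ≤ δ ∧ ∀ c : Fin K → ℝ, l0 c ≤ S →
    (1 - δ) * (l2 c)^2 ≤ (l2 (Ψ.mulVec c))^2 ∧
    (l2 (Ψ.mulVec c))^2 ≤ (1 + δ) * (l2 c)^2}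

/-!
If `Ψ c = Ψ c*` with `c ≠ c*`, then `h = c - c*` is a nonzero vector in the kernel of `Ψ`.
The Gram matrix `Ψᵀ Ψ` has unit diagonal and off-diagonal entries bounded by `μ`, so
`0 = hᵀ Ψᵀ Ψ h ≥ ‖h‖₂² - μ (‖h‖₁² - ‖h‖₂²)`, while Cauchy–Schwarz on the support gives
`‖h‖₁² ≤ ‖h‖₀ ‖h‖₂²`. Hence `1 ≤ μ (‖h‖₀ - 1)`, i.e. `‖h‖₀ ≥ 1 + 1/μ`, and since
`‖h‖₀ ≤ ‖c‖₀ + ‖c*‖₀` and `2 ‖c*‖₀ < 1 + 1/μ`, we get `‖c*‖₀ < ‖c‖₀`.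
-/

open Matrix

section QuadraticForm

variable {ι R : Type*} [Fintype ι] [DecidableEq ι] [CommRing R] [LinearOrder R]
  [IsStrictOrderedRing R] {G : Matrix ι ι R} {μ : R}

lemma sq_sub_mul_le_mul_mulVec (hdiag : ∀ i, G i i = 1) (hoff : ∀ i j, i ≠ j → |G i j| ≤ μ)
    (h : ι → R) (i : ι) :
    h i ^ 2 - μ * (|h i| * ∑ j, |h j| - h i ^ 2) ≤ h i * (G *ᵥ h) i := by
  have hrow : h i * (G *ᵥ h) i = h i ^ 2 + ∑ j ∈ univ.erase i, h i * G i j * h j := by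
    rw [mulVec, dotProduct, ← add_sum_erase _ _ (mem_univ i), hdiag, mul_add, mul_sum]
    simp only [mul_assoc]
    ring
  have habs : |h i| * ∑ j, |h j| - h i ^ 2 = ∑ j ∈ univ.erase i, |h i| * |h j| := by
    rw [← add_sum_erase _ _ (mem_univ i), mul_add, mul_sum, ← sq, sq_abs]
    ring
  have hterm : ∀ j ∈ univ.erase i, -(μ * (|h i| * |h j|)) ≤ h i * G i j * h j := by
    intro j hj
    have hGij := hoff i j (ne_of_mem_erase hj).symm
    calc -(μ * (|h i| * |h j|)) ≤ -(|G i j| * (|h i| * |h j|)) := by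
          gcongr
      _ = -|h i * G i j * h j| := by rw [abs_mul, abs_mul]; ring
      _ ≤ h i * G i j * h j := neg_abs_le _
  rw [hrow, habs, mul_sum, sub_eq_add_neg, ← sum_neg_distrib]
  gcongr with j hj
  exact hterm j hj

lemma sum_sq_sub_mul_le_dotProduct_mulVec (hdiag : ∀ i, G i i = 1)
    (hoff : ∀ i j, i ≠ j → |G i j| ≤ μ) (h : ι → R) :
    ∑ i, h i ^ 2 - μ * ((∑ i, |h i|) ^ 2 - ∑ i, h i ^ 2) ≤ h ⬝ᵥ (G *ᵥ h) := by
  calc ∑ i, h i ^ 2 - μ * ((∑ i, |h i|) ^ 2 - ∑ i, h i ^ 2)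
      = ∑ i, (h i ^ 2 - μ * (|h i| * ∑ j, |h j| - h i ^ 2)) := by
        rw [sq (∑ i, |h i|), sum_mul, ← sum_sub_distrib, mul_sum, ← sum_sub_distrib]
    _ ≤ ∑ i, h i * (G *ᵥ h) i := sum_le_sum fun i _ => sq_sub_mul_le_mul_mulVec hdiag hoff h i

end QuadraticForm

lemma sq_sum_abs_le_l0_mul_sum_sq {K : ℕ} (h : Fin K → ℝ) :
    (∑ i, |h i|) ^ 2 ≤ l0 h * ∑ i, h i ^ 2 := by
  have hsupp : ∀ f : ℝ → ℝ, f 0 = 0 → ∑ i with h i ≠ 0, f (h i) = ∑ i, f (h i) :=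
    fun f hf => sum_filter_of_ne fun i _ hfi hi => hfi (by rw [hi, hf])
  rw [← hsupp _ abs_zero, ← hsupp (· ^ 2) (zero_pow two_ne_zero)]
  simpa only [sq_abs, l0] using
    sq_sum_le_card_mul_sum_sq (s := univ.filter (h · ≠ 0)) (f := (|h ·|))

lemma l0_sub_le {K : ℕ} (c d : Fin K → ℝ) : l0 (c - d) ≤ l0 c + l0 d := by
  refine (card_le_card fun i => ?_).trans (card_union_le _ _)
  simp only [mem_filter, mem_union, mem_univ, true_and, Pi.sub_apply]
  contrapose!
  rintro ⟨hc, hd⟩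
  rw [hc, hd, sub_zero]

lemma one_le_mul_l0_sub_one_of_mulVec_eq_zero {m : Type*} [Fintype m] {K : ℕ}
    {Ψ : Matrix m (Fin K) ℝ} (hcol : ∀ j, ∑ k, Ψ k j ^ 2 = 1) {μ : ℝ} (hμ : 0 ≤ μ)
    (hoff : ∀ i j, i ≠ j → |∑ k, Ψ k i * Ψ k j| ≤ μ) {h : Fin K → ℝ} (hh : h ≠ 0)
    (hΨh : Ψ *ᵥ h = 0) :
    1 ≤ μ * (l0 h - 1) := by
  have hgram : ∀ i j, (Ψᵀ * Ψ) i j = ∑ k, Ψ k i * Ψ k j := fun i j => by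
    simp only [mul_apply, transpose_apply]
  have hdiag : ∀ i, (Ψᵀ * Ψ) i i = 1 := fun i => by simp only [hgram, ← sq, hcol]
  have hquad : h ⬝ᵥ ((Ψᵀ * Ψ) *ᵥ h) = 0 := by
    rw [← mulVec_mulVec, hΨh, mulVec_zero, dotProduct_zero]
  have hT : 0 < ∑ i, h i ^ 2 := by
    obtain ⟨i, hi⟩ := Function.ne_iff.mp hh
    exact sum_pos' (fun i _ => sq_nonneg (h i)) ⟨i, mem_univ i, sq_pos_of_ne_zero hi⟩
  have hgersh :=
    sum_sq_sub_mul_le_dotProduct_mulVec hdiag (fun i j hij => hgram i j ▸ hoff i j hij) h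
  have hcs := sq_sum_abs_le_l0_mul_sum_sq h
  have : ∑ i, h i ^ 2 ≤ (∑ i, h i ^ 2) * (μ * (l0 h - 1)) := by
    calc ∑ i, h i ^ 2 ≤ μ * ((∑ i, |h i|) ^ 2 - ∑ i, h i ^ 2) := by linarith
      _ ≤ μ * (l0 h * ∑ i, h i ^ 2 - ∑ i, h i ^ 2) := by gcongr
      _ = (∑ i, h i ^ 2) * (μ * (l0 h - 1)) := by ring
  exact le_of_mul_le_mul_left (by linarith) hT

lemma coherence_nonneg {M K : ℕ} (Ψ : Matrix (Fin M) (Fin K) ℝ) : 0 ≤ coherence Ψ :=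
  Real.sSup_nonneg <| by rintro x ⟨i, j, -, rfl⟩; positivity

lemma abs_sum_mul_le_coherence {M K : ℕ} {Ψ : Matrix (Fin M) (Fin K) ℝ}
    (hcol : ∀ j, ∑ m, Ψ m j ^ 2 = 1) {i j : Fin K} (hij : i ≠ j) :
    |∑ m, Ψ m i * Ψ m j| ≤ coherence Ψ := by
  refine le_csSup ⟨1, ?_⟩ ⟨i, j, hij, by simp [hcol]⟩
  rintro x ⟨a, b, -, rfl⟩
  rw [hcol, hcol, Real.sqrt_one, mul_one, div_one, ← sq_le_one_iff_abs_le_one]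
  simpa [hcol] using sum_mul_sq_le_sq_mul_sq univ (Ψ · a) (Ψ · b)

theorem l0_unique_recovery {M K : ℕ} (Ψ : Matrix (Fin M) (Fin K) ℝ)
    (hcol : ∀ j : Fin K, ∑ m, (Ψ m j)^2 = 1)
    (u : Fin M → ℝ) (cstar : Fin K → ℝ)
    (hsol : Ψ.mulVec cstar = u)
    (hsparse : (l0 cstar : ℝ) < (1 + 1 / coherence Ψ) / 2) :
    ∀ c : Fin K → ℝ, Ψ.mulVec c = u → c ≠ cstar → l0 cstar < l0 c := by
  intro c hc hne
  have hspark := one_le_mul_l0_sub_one_of_mulVec_eq_zero hcol (coherence_nonneg Ψ)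
    (fun i j => abs_sum_mul_le_coherence hcol) (sub_ne_zero.mpr hne)
    (by rw [mulVec_sub, hc, hsol, sub_self])
  have hsub : (l0 (c - cstar) : ℝ) ≤ l0 c + l0 cstar := by exact_mod_cast l0_sub_le c cstar
  have hμ : 0 < coherence Ψ := by
    by_contra! hμ
    nlinarith [coherence_nonneg Ψ]
  have : 1 / coherence Ψ ≤ l0 c + l0 cstar - 1 := by
    rw [div_le_iff₀' hμ]
    nlinarith
  exact_mod_cast (by linarith : (l0 cstar : ℝ) < l0 c)
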